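/- Let Υ > 0 vary over an open interval, f_Υ(z) = 1/(Υ⁻¹eᶻ + 1), w_Υ(z) = z²f_Υ(z), and ⟨·,·⟩_Υ the weighted inner product on (0,∞). Let (ψ̂_i(Υ,·))_i be polynomials of degree i with C¹-in-Υ coefficients, orthonormal with respect to w_Υ, and assume differentiation under the integral sign is valid for polynomial families. Then the matrix B^k_i = Υ(⟨(1/f_Υ)(∂_Υ f_Υ) ψ̂_i, ψ̂_k⟩_Υ + ⟨∂_Υ ψ̂_i, ψ̂_k⟩_Υ) satisfies B^k_i = −Υ⟨ψ̂_i, ∂_Υ ψ̂_k⟩_Υ; in particular B^k_i = 0 whenever k < i (B is lower triangular), since ∂_Υψ̂_k is a polynomial of degree at most k. -/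

import Mathlib

open MeasureTheory Real Set Finset

/-- A family `p(Υ,z)` which is, for each parameter value `Υ ∈ U`, a polynomial in `z` (of
degree at most some fixed `n`) whose coefficients are `C¹` functions of `Υ` on `U`. -/
def IsC1OnPolyFamily (U : Set ℝ) (p : ℝ → ℝ → ℝ) : Prop :=
  ∃ (n : ℕ) (c : ℕ → ℝ → ℝ), (∀ k, ContDiffOn ℝ 1 (c k) U) ∧
    ∀ u ∈ U, ∀ z : ℝ, p u z = ∑ k ∈ range (n + 1), c k u * z ^ k

/-- A family `p(Υ,z)` which is, for each `Υ ∈ U`, a polynomial in `z` of fixed degree exactly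
`i` whose coefficients are `C¹` functions of `Υ` on `U`. -/
def IsC1OnPolyFamilyDeg (U : Set ℝ) (i : ℕ) (p : ℝ → ℝ → ℝ) : Prop :=
  ∃ c : ℕ → ℝ → ℝ, (∀ k, ContDiffOn ℝ 1 (c k) U) ∧ (∀ u ∈ U, c i u ≠ 0) ∧
    ∀ u ∈ U, ∀ z : ℝ, p u z = ∑ k ∈ range (i + 1), c k u * z ^ k

/-!
Since `∂_Υ f_Υ = f_Υ (1 - f_Υ) / Υ`, the weight satisfies `∂_Υ w_Υ = (∂_Υ f_Υ / f_Υ) w_Υ` with a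
logarithmic derivative bounded by `Υ⁻¹`, and `w_Υ ≤ Υ z² e⁻ᶻ`; so every integrand is a polynomial
against `w_Υ`, up to a bounded factor, and is integrable. Differentiating the constant
`⟨ψ̂_i, ψ̂_k⟩_Υ = δ_ik` under the integral sign gives
`⟨(∂_Υ f_Υ / f_Υ) ψ̂_i, ψ̂_k⟩_Υ + ⟨∂_Υ ψ̂_i, ψ̂_k⟩_Υ + ⟨ψ̂_i, ∂_Υ ψ̂_k⟩_Υ = 0`,
which is the identity.
As `ψ̂_0, …, ψ̂_{i-1}` have degrees `0, …, i-1`, they span the polynomials of degree `< i`, all of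
which are therefore orthogonal to `ψ̂_i`; and `∂_Υ ψ̂_k` has degree at most `k`.
-/

open Polynomial

namespace Polynomial

theorem coeff_sum_range_C_mul_X_pow {R : Type*} [Semiring R] (c : ℕ → R) (n m : ℕ) :
    (∑ k ∈ range (n + 1), C (c k) * X ^ k).coeff m = if m ≤ n then c m else 0 := by
  simp [finsetSum_coeff]

theorem degree_sum_range_C_mul_X_pow_le {R : Type*} [Semiring R] (c : ℕ → R) (n : ℕ) :
    (∑ k ∈ range (n + 1), C (c k) * X ^ k).degree ≤ (n : WithBot ℕ) :=
  (degree_le_iff_coeff_zero _ _).2 fun m hm => by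
    rw [coeff_sum_range_C_mul_X_pow, if_neg (not_le.2 (by exact_mod_cast hm))]

theorem linearMap_eq_zero_of_degree_lt {K M : Type*} [DivisionRing K] [AddCommGroup M]
    [Module K M] {Q : ℕ → K[X]} (hQ : ∀ j, (Q j).degree = j) (L : K[X] →ₗ[K] M) {i : ℕ}
    (hL : ∀ j < i, L (Q j) = 0) {P : K[X]} (hP : P.degree < i) : L P = 0 := by
  let S : Sequence K := ⟨Q, hQ⟩
  have hspan := S.span_degreeLT (m := i) fun j _ => (leadingCoeff_ne_zero.2 (S.ne_zero j)).isUnit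
  have hPspan : P ∈ Submodule.span K (S '' Set.Iio i) := hspan ▸ mem_degreeLT.2 hP
  exact (Submodule.span_le (p := LinearMap.ker L)).2 (by rintro _ ⟨j, hj, rfl⟩; exact hL j hj)
    hPspan

theorem integrable_eval_mul {μ : Measure ℝ} {w : ℝ → ℝ}
    (h : ∀ m : ℕ, Integrable (fun z => z ^ m * w z) μ) (P : ℝ[X]) :
    Integrable (fun z => P.eval z * w z) μ := by
  induction P using Polynomial.induction_on' with
  | add p q hp hq => simpa only [eval_add, add_mul] using hp.fun_add hq
  | monomial n a => simpa only [eval_monomial, mul_assoc] using (h n).const_mul a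

theorem integral_eval_mul_eval_mul_eq_zero_of_degree_lt {μ : Measure ℝ} {w : ℝ → ℝ}
    (hw : ∀ P Q : ℝ[X], Integrable (fun z => P.eval z * Q.eval z * w z) μ)
    {Ψ : ℕ → ℝ[X]} (hΨ : ∀ j, (Ψ j).degree = j) {Q : ℝ[X]} {i : ℕ}
    (horth : ∀ j < i, ∫ z, Q.eval z * (Ψ j).eval z * w z ∂μ = 0) {P : ℝ[X]} (hP : P.degree < i) :
    ∫ z, Q.eval z * P.eval z * w z ∂μ = 0 := by
  let L : ℝ[X] →ₗ[ℝ] ℝ :=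
    { toFun := fun P => ∫ z, Q.eval z * P.eval z * w z ∂μ
      map_add' := fun P R => by
        simp only [eval_add, mul_add, add_mul]
        exact integral_add (hw Q P) (hw Q R)
      map_smul' := fun a P => by
        simp only [eval_smul, smul_eq_mul, RingHom.id_apply, ← integral_const_mul]
        congr with z
        ring }
  exact linearMap_eq_zero_of_degree_lt hΨ L horth hP

end Polynomial

theorem integral_deriv_mul_mul {α : Type*} [MeasurableSpace α] {μ : Measure α}
    {p q w : ℝ → α → ℝ} {p' q' ℓ : α → ℝ} {u : ℝ}
    (hp : ∀ z, HasDerivAt (p · z) (p' z) u) (hq : ∀ z, HasDerivAt (q · z) (q' z) u)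
    (hw : ∀ z, HasDerivAt (w · z) (ℓ z * w u z) u)
    (h₁ : Integrable (fun z => ℓ z * p u z * q u z * w u z) μ)
    (h₂ : Integrable (fun z => p' z * q u z * w u z) μ)
    (h₃ : Integrable (fun z => p u z * q' z * w u z) μ) :
    ∫ z, deriv (fun v => p v z * q v z * w v z) u ∂μ =
      (∫ z, ℓ z * p u z * q u z * w u z ∂μ) + (∫ z, p' z * q u z * w u z ∂μ)
        + ∫ z, p u z * q' z * w u z ∂μ := by
  rw [← integral_add h₁ h₂, ← integral_add (h₁.fun_add h₂) h₃]
  congr with z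
  rw [(((hp z).fun_mul (hq z)).fun_mul (hw z)).deriv]
  ring

namespace IsC1OnPolyFamilyDeg

variable {U : Set ℝ} {i : ℕ} {p : ℝ → ℝ → ℝ} {u : ℝ}

theorem isC1OnPolyFamily (h : IsC1OnPolyFamilyDeg U i p) : IsC1OnPolyFamily U p :=
  let ⟨c, hc, _, hp⟩ := h
  ⟨i, c, hc, hp⟩

theorem exists_degree_eq_eval (h : IsC1OnPolyFamilyDeg U i p) (hu : u ∈ U) :
    ∃ P : ℝ[X], P.degree = i ∧ ∀ z, p u z = P.eval z := by
  obtain ⟨c, -, hci, hp⟩ := h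
  refine ⟨∑ k ∈ range (i + 1), C (c k u) * X ^ k, degree_eq_of_le_of_coeff_ne_zero
    (degree_sum_range_C_mul_X_pow_le _ _) ?_, fun z => by simp [hp u hu z, eval_finsetSum]⟩
  simpa [coeff_sum_range_C_mul_X_pow] using hci u hu

theorem exists_degree_le_hasDerivAt_eval (h : IsC1OnPolyFamilyDeg U i p) (hU : IsOpen U)
    (hu : u ∈ U) : ∃ P : ℝ[X], P.degree ≤ i ∧ ∀ z, HasDerivAt (p · z) (P.eval z) u := by
  obtain ⟨c, hc, -, hp⟩ := h
  refine ⟨∑ k ∈ range (i + 1), C (deriv (c k) u) * X ^ k,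
    degree_sum_range_C_mul_X_pow_le _ _, fun z => ?_⟩
  have hcu (k : ℕ) : HasDerivAt (c k) (deriv (c k) u) u :=
    (((hc k).differentiableOn one_ne_zero).differentiableAt (hU.mem_nhds hu)).hasDerivAt
  have hsum : HasDerivAt (fun v => ∑ k ∈ range (i + 1), c k v * z ^ k)
      ((∑ k ∈ range (i + 1), C (deriv (c k) u) * X ^ k : ℝ[X]).eval z) u := by
    simpa [eval_finsetSum] using HasDerivAt.fun_sum fun k _ => (hcu k).mul_const (z ^ k)
  exact hsum.congr_of_eventuallyEq (Filter.mem_of_superset (hU.mem_nhds hu) fun v hv => hp v hv z)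

end IsC1OnPolyFamilyDeg

noncomputable def fermiDirac (u z : ℝ) : ℝ := 1 / (u⁻¹ * Real.exp z + 1)

noncomputable def fermiWeight (u z : ℝ) : ℝ := z ^ 2 * fermiDirac u z

section FermiDirac

variable {u : ℝ}

theorem fermiDirac_pos (hu : 0 < u) (z : ℝ) : 0 < fermiDirac u z := by
  unfold fermiDirac; positivity

theorem fermiDirac_le_one (hu : 0 < u) (z : ℝ) : fermiDirac u z ≤ 1 :=
  div_le_one_of_le₀ (le_add_of_nonneg_left (by positivity)) (by positivity)

theorem fermiDirac_le_mul_exp_neg (hu : 0 < u) (z : ℝ) : fermiDirac u z ≤ u * Real.exp (-z) := by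
  calc fermiDirac u z ≤ 1 / (u⁻¹ * Real.exp z) :=
        one_div_le_one_div_of_le (by positivity) (le_add_of_nonneg_right zero_le_one)
    _ = u * Real.exp (-z) := by rw [Real.exp_neg]; field_simp

theorem continuous_fermiDirac (hu : 0 < u) : Continuous (fermiDirac u) :=
  continuous_const.div (by fun_prop) fun z => by positivity

theorem hasDerivAt_fermiDirac (hu : 0 < u) (z : ℝ) :
    HasDerivAt (fermiDirac · z) (fermiDirac u z * (1 - fermiDirac u z) / u) u := by
  have hden : u⁻¹ * Real.exp z + 1 ≠ 0 := by positivity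
  have h := (((hasDerivAt_inv hu.ne').mul_const (Real.exp z)).add_const 1).fun_inv hden
  simp only [fermiDirac, one_div]
  refine h.congr_deriv ?_
  field_simp
  ring

theorem deriv_fermiDirac_div (hu : 0 < u) (z : ℝ) :
    deriv (fermiDirac · z) u / fermiDirac u z = (1 - fermiDirac u z) / u := by
  rw [(hasDerivAt_fermiDirac hu z).deriv]
  field_simp [(fermiDirac_pos hu z).ne']

theorem hasDerivAt_fermiWeight (hu : 0 < u) (z : ℝ) :
    HasDerivAt (fermiWeight · z)
      (deriv (fermiDirac · z) u / fermiDirac u z * fermiWeight u z) u := by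
  refine ((hasDerivAt_fermiDirac hu z).const_mul (z ^ 2)).congr_deriv ?_
  rw [deriv_fermiDirac_div hu, fermiWeight]
  ring

theorem integrableOn_pow_mul_exp_neg (m : ℕ) :
    IntegrableOn (fun z : ℝ => z ^ m * Real.exp (-z)) (Ioi 0) := by
  refine (Real.GammaIntegral_convergent (s := m + 1) (by positivity)).congr_fun
    (fun z _ => ?_) measurableSet_Ioi
  simp only [add_sub_cancel_right, Real.rpow_natCast]
  ring

theorem integrableOn_pow_mul_fermiWeight (hu : 0 < u) (m : ℕ) :
    IntegrableOn (fun z => z ^ m * fermiWeight u z) (Ioi 0) := by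
  have hcont : Continuous fun z => z ^ m * fermiWeight u z :=
    (continuous_pow m).mul ((continuous_pow 2).mul (continuous_fermiDirac hu))
  refine Integrable.mono' ((integrableOn_pow_mul_exp_neg (m + 2)).const_mul u)
    hcont.aestronglyMeasurable ?_
  filter_upwards [ae_restrict_mem measurableSet_Ioi] with z (hz : 0 < z)
  have hf := fermiDirac_pos hu z
  have hw : 0 ≤ fermiWeight u z := mul_nonneg (sq_nonneg z) hf.le
  rw [Real.norm_of_nonneg (mul_nonneg (pow_nonneg hz.le m) hw)]
  calc z ^ m * fermiWeight u z = z ^ (m + 2) * fermiDirac u z := by unfold fermiWeight; ring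
    _ ≤ z ^ (m + 2) * (u * Real.exp (-z)) := by gcongr; exact fermiDirac_le_mul_exp_neg hu z
    _ = u * (z ^ (m + 2) * Real.exp (-z)) := by ring

theorem integrableOn_eval_mul_eval_mul_fermiWeight (hu : 0 < u) (P Q : ℝ[X]) :
    IntegrableOn (fun z => P.eval z * Q.eval z * fermiWeight u z) (Ioi 0) := by
  have h := integrable_eval_mul (integrableOn_pow_mul_fermiWeight hu) (P * Q)
  simp only [eval_mul] at h
  exact h

theorem integrableOn_deriv_fermiDirac_div_mul (hu : 0 < u) (P Q : ℝ[X]) :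
    IntegrableOn (fun z => deriv (fermiDirac · z) u / fermiDirac u z * P.eval z * Q.eval z *
      fermiWeight u z) (Ioi 0) := by
  have hbound : ∀ z, ‖(1 - fermiDirac u z) / u‖ ≤ u⁻¹ := fun z => by
    have h₀ := fermiDirac_pos hu z
    have h₁ := fermiDirac_le_one hu z
    rw [Real.norm_of_nonneg (by positivity), div_eq_mul_inv]
    exact mul_le_of_le_one_left (by positivity) (by linarith)
  refine IntegrableOn.congr_fun (Integrable.bdd_mul (f := fun z => (1 - fermiDirac u z) / u)
    (integrableOn_eval_mul_eval_mul_fermiWeight hu P Q)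
    ((continuous_const.sub (continuous_fermiDirac hu)).div_const u).aestronglyMeasurable
    (ae_of_all _ hbound)) (fun z _ => ?_) measurableSet_Ioi
  rw [deriv_fermiDirac_div hu]
  ring

end FermiDirac

/-- The matrix `B^k_i = Υ(⟨(1/f_Υ)(∂_Υf_Υ)ψ̂_i, ψ̂_k⟩_Υ + ⟨∂_Υψ̂_i, ψ̂_k⟩_Υ)` of the
chemical non-equilibrium spectral method satisfies `B^k_i = −Υ⟨ψ̂_i, ∂_Υψ̂_k⟩_Υ`; in
particular `B` is lower triangular. -/
theorem B_matrix_identity_and_lower_triangularity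
    (U : Set ℝ) (hU : IsOpen U) (hUpos : U ⊆ Ioi (0:ℝ))
    (fΥ w : ℝ → ℝ → ℝ)
    (hfΥ : ∀ u z, fΥ u z = 1 / (u⁻¹ * Real.exp z + 1))
    (hw : ∀ u z, w u z = z ^ 2 * fΥ u z)
    (ψ : ℕ → ℝ → ℝ → ℝ)
    (hψ : ∀ i, IsC1OnPolyFamilyDeg U i (ψ i))
    (horth : ∀ i j, ∀ u ∈ U,
      (∫ z in Ioi (0:ℝ), ψ i u z * ψ j u z * w u z) = if i = j then 1 else 0)
    (hDUIS : ∀ p q : ℝ → ℝ → ℝ, IsC1OnPolyFamily U p → IsC1OnPolyFamily U q →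
      ∀ u ∈ U, HasDerivAt (fun v => ∫ z in Ioi (0:ℝ), p v z * q v z * w v z)
        (∫ z in Ioi (0:ℝ), deriv (fun v => p v z * q v z * w v z) u) u)
    (B : ℕ → ℕ → ℝ → ℝ)
    (hB : ∀ k i, ∀ u ∈ U, B k i u =
      u * ((∫ z in Ioi (0:ℝ),
              (deriv (fun v => fΥ v z) u / fΥ u z * ψ i u z) * ψ k u z * w u z)
        + ∫ z in Ioi (0:ℝ), deriv (fun v => ψ i v z) u * ψ k u z * w u z)) :
    ∀ u ∈ U, ∀ k i : ℕ,
      B k i u = -u * (∫ z in Ioi (0:ℝ), ψ i u z * deriv (fun v => ψ k v z) u * w u z)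
      ∧ (k < i → B k i u = 0) := by
  obtain rfl : fΥ = fermiDirac := funext₂ hfΥ
  obtain rfl : w = fermiWeight := funext₂ hw
  intro u hu k i
  have hu0 : 0 < u := hUpos hu
  choose Ψ hΨdeg hΨ using fun j => (hψ j).exists_degree_eq_eval hu
  choose Ψ' hΨ'deg hΨ' using fun j => (hψ j).exists_degree_le_hasDerivAt_eval hU hu
  have hderiv (j : ℕ) (z : ℝ) : deriv (ψ j · z) u = (Ψ' j).eval z := (hΨ' j z).deriv
  have hint := integrableOn_eval_mul_eval_mul_fermiWeight hu0
  have hproduct := integral_deriv_mul_mul (μ := volume.restrict (Ioi 0)) (hΨ' i) (hΨ' k)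
    (hasDerivAt_fermiWeight hu0)
    (by simpa only [hΨ] using (integrableOn_deriv_fermiDirac_div_mul hu0 (Ψ i) (Ψ k)).integrable)
    (by simpa only [hΨ] using (hint (Ψ' i) (Ψ k)).integrable)
    (by simpa only [hΨ] using (hint (Ψ i) (Ψ' k)).integrable)
  have hzero : ∫ z in Ioi 0, deriv (fun v => ψ i v z * ψ k v z * fermiWeight v z) u = 0 :=
    (hDUIS _ _ (hψ i).isC1OnPolyFamily (hψ k).isC1OnPolyFamily u hu).unique
      ((hasDerivAt_const u _).congr_of_eventuallyEq
        (Filter.mem_of_superset (hU.mem_nhds hu) fun v hv => horth i k v hv))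
  have hBk : B k i u = -u * ∫ z in Ioi 0, ψ i u z * deriv (ψ k · z) u * fermiWeight u z := by
    simp only [hB k i u hu, hderiv]
    linear_combination u * (hproduct.symm.trans hzero)
  refine ⟨hBk, fun hki => ?_⟩
  rw [hBk]
  refine mul_eq_zero_of_right _ ?_
  simp only [hderiv, hΨ]
  refine integral_eval_mul_eval_mul_eq_zero_of_degree_lt hint hΨdeg (fun j hj => ?_)
    ((hΨ'deg k).trans_lt (by exact_mod_cast hki))
  simpa only [hΨ, if_neg hj.ne'] using horth i j u hu
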